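/- arXiv:2507.14884 — 4 statements merged into one kernel-verified Lean document; each statement's English description precedes it below -/
import Mathlib

section
/- Suppose three axis-parallel boxes B_1, B_2, B_3 in ℝ^d (each a product of nondegenerate closed intervals) pairwise intersect, and each pairwise intersection is contained in some hyperplane perpendicular to the first coordinate axis. Then a contradiction follows; i.e., no three such boxes can pairwise intersect. -/
open Set

/-- The closed axis-parallel box `∏ [a k, b k]` in `ℝ^d`. -/
def boxSet {d : ℕ} (a b : Fin d → ℝ) : Set (Fin d → ℝ) :=
  {x | ∀ k, x k ∈ Set.Icc (a k) (b k)}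

/-- The open interior `∏ (a k, b k)` of an axis-parallel box. -/
def openBoxSet {d : ℕ} (a b : Fin d → ℝ) : Set (Fin d → ℝ) :=
  {x | ∀ k, x k ∈ Set.Ioo (a k) (b k)}

/-- `G` is a `d`-CBU graph: the intersection graph of a family of nondegenerate
axis-parallel boxes in `ℝ^d` whose pairwise intersections lie in hyperplanes
perpendicular to the first coordinate axis. -/
def IsCBU (d : ℕ) (hd : 0 < d) {n : ℕ} (G : SimpleGraph (Fin n)) : Prop :=
  ∃ a b : Fin n → Fin d → ℝ,
    (∀ i k, a i k < b i k) ∧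
    (∀ i j : Fin n, i ≠ j →
      ∃ c : ℝ, boxSet (a i) (b i) ∩ boxSet (a j) (b j) ⊆ {x | x ⟨0, hd⟩ = c}) ∧
    (∀ i j : Fin n, G.Adj i j ↔
      i ≠ j ∧ (boxSet (a i) (b i) ∩ boxSet (a j) (b j)).Nonempty)

/-! Two boxes meet in the box whose first-coordinate interval is `[max aᵢ aⱼ, min bᵢ bⱼ]`, so
lying in a hyperplane `x₁ = c` forces `max aᵢ aⱼ = min bᵢ bⱼ`: the first-coordinate intervals
of any two of the boxes touch end to end. Orienting each touching pair from the interval that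
ends to the one that starts there gives a tournament on three vertices, and both of its shapes,
a cycle and a transitive triangle, contradict `aᵢ < bᵢ`. -/

lemma boxSet_eq_Icc {d : ℕ} (a b : Fin d → ℝ) : boxSet a b = Icc a b := by
  ext x
  simp only [boxSet, mem_Icc, Pi.le_def, mem_ofPred_eq, forall_and]

lemma apply_eq_of_Icc_subset_hyperplane {ι α : Type*} [DecidableEq ι] [PartialOrder α]
    {a b : ι → α} (hne : (Icc a b).Nonempty) {k : ι} {c : α} (h : Icc a b ⊆ {x | x k = c}) :
    a k = b k := by
  have hab : a ≤ b := nonempty_Icc.1 hne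
  have hleft : a ∈ Icc a b := left_mem_Icc.2 hab
  have hupdate : Function.update a k (b k) ∈ Icc a b :=
    ⟨le_update_iff.2 ⟨hab k, fun _ _ => le_rfl⟩,
      update_le_iff.2 ⟨le_rfl, fun j _ => hab j⟩⟩
  have hc := h hupdate
  simp only [mem_ofPred_eq, Function.update_self] at hc
  exact (h hleft).trans hc.symm

lemma eq_or_eq_of_sup_eq_inf {α : Type*} [LinearOrder α] {a b a' b' : α} (hab : a < b)
    (hab' : a' < b') (h : a ⊔ a' = b ⊓ b') : b = a' ∨ b' = a := by
  rcases max_choice a a' with ha | ha <;> rcases min_choice b b' with hb | hb <;>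
    rw [ha, hb] at h
  all_goals first | exact Or.inl h.symm | exact Or.inr h | order

lemma false_of_three_intervals_touching {α : Type*} [LinearOrder α] (a b : Fin 3 → α)
    (hab : ∀ i, a i < b i) (h : ∀ i j, i ≠ j → a i ⊔ a j = b i ⊓ b j) : False := by
  have touch (i j : Fin 3) (hij : i ≠ j) := eq_or_eq_of_sup_eq_inf (hab i) (hab j) (h i j hij)
  have := hab 0; have := hab 1; have := hab 2
  rcases touch 0 1 (by decide) with h01 | h01 <;> rcases touch 0 2 (by decide) with h02 | h02 <;>
    rcases touch 1 2 (by decide) with h12 | h12 <;> order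

theorem no_three_boxes (d : ℕ) (hd : 0 < d) (a b : Fin 3 → Fin d → ℝ)
    (hab : ∀ i k, a i k < b i k)
    (hint : ∀ i j : Fin 3, i ≠ j →
      (boxSet (a i) (b i) ∩ boxSet (a j) (b j)).Nonempty)
    (huni : ∀ i j : Fin 3, i ≠ j →
      ∃ c : ℝ, boxSet (a i) (b i) ∩ boxSet (a j) (b j) ⊆ {x | x ⟨0, hd⟩ = c}) :
    False := by
  refine false_of_three_intervals_touching (fun i => a i ⟨0, hd⟩) (fun i => b i ⟨0, hd⟩)
    (fun i => hab i _) fun i j hij => ?_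
  obtain ⟨c, hc⟩ := huni i j hij
  have hne := hint i j hij
  simp only [boxSet_eq_Icc, Icc_inter_Icc] at hc hne
  exact apply_eq_of_Icc_subset_hyperplane hne hc
end

section
/- Every 1-CBU graph is properly 2-colorable: if G is the intersection graph of a finite family of nondegenerate closed intervals in ℝ such that any two distinct intersecting intervals meet only at a single shared endpoint, then χ(G) ≤ 2. -/
/-!
If two nondegenerate closed intervals meet in at most one point, one lies weakly to the left of the
other, and when they meet at all the right end of one is the left end of the other. In that case the
intervals lying weakly left of the right one are exactly the left one together with those lying
weakly left of it. So the number of intervals weakly left of an interval goes up by exactly one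
along every edge, and its parity is a proper 2-colouring.
-/

open Set

open scoped Finset

section LinearOrder

variable {α : Type*} [LinearOrder α]

lemma le_or_le_of_Icc_inter_Icc_subsingleton {a₁ b₁ a₂ b₂ : α}
    (h₁ : a₁ < b₁) (h₂ : a₂ < b₂)
    (h : (Set.Icc a₁ b₁ ∩ Set.Icc a₂ b₂).Subsingleton) :
    b₁ ≤ a₂ ∨ b₂ ≤ a₁ := by
  rw [Set.Icc_inter_Icc, Set.subsingleton_Icc_iff, inf_le_iff, le_sup_iff, le_sup_iff] at h
  by_contra! hlt
  rcases h with (h | h) | (h | h) <;> order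

lemma eq_or_eq_of_Icc_inter_Icc_subsingleton {a₁ b₁ a₂ b₂ : α}
    (h₁ : a₁ < b₁) (h₂ : a₂ < b₂)
    (h : (Set.Icc a₁ b₁ ∩ Set.Icc a₂ b₂).Subsingleton)
    (hne : (Set.Icc a₁ b₁ ∩ Set.Icc a₂ b₂).Nonempty) : b₁ = a₂ ∨ b₂ = a₁ := by
  obtain ⟨x, ⟨hx₁, hx₁'⟩, hx₂, hx₂'⟩ := hne
  rcases le_or_le_of_Icc_inter_Icc_subsingleton h₁ h₂ h with h | h
  · exact .inl (by order)
  · exact .inr (by order)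

variable {ι : Type*} [Fintype ι] {a b : ι → α}

def leftOf (a b : ι → α) (i : ι) : Finset ι := {k | b k ≤ a i}

variable [DecidableEq ι]

lemma leftOf_eq_insert_of_eq (hab : ∀ i, a i < b i)
    (huni : ∀ i j, i ≠ j → (Set.Icc (a i) (b i) ∩ Set.Icc (a j) (b j)).Subsingleton)
    {i j : ι} (hij : b i = a j) : leftOf a b j = insert i (leftOf a b i) := by
  ext k
  simp only [leftOf, Finset.mem_insert, Finset.mem_filter, Finset.mem_univ, true_and]
  constructor
  · intro hk
    by_cases hki : k = i
    · exact .inl hki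
    · have hside := le_or_le_of_Icc_inter_Icc_subsingleton (hab k) (hab i) (huni k i hki)
      have := hab k
      exact .inr (hside.resolve_right (by order))
  · rintro (rfl | hk)
    · exact hij.le
    · have := hab i
      order

lemma card_leftOf_of_eq (hab : ∀ i, a i < b i)
    (huni : ∀ i j, i ≠ j → (Set.Icc (a i) (b i) ∩ Set.Icc (a j) (b j)).Subsingleton)
    {i j : ι} (hij : b i = a j) : #(leftOf a b j) = #(leftOf a b i) + 1 := by
  rw [leftOf_eq_insert_of_eq hab huni hij, Finset.card_insert_of_notMem]
  simpa [leftOf] using hab i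

end LinearOrder

theorem oneCBU_two_colorable (n : ℕ) (a b : Fin n → ℝ) (hab : ∀ i, a i < b i)
    (huni : ∀ i j : Fin n, i ≠ j →
      (Set.Icc (a i) (b i) ∩ Set.Icc (a j) (b j)).Subsingleton)
    (G : SimpleGraph (Fin n))
    (hG : ∀ i j : Fin n, G.Adj i j ↔
      i ≠ j ∧ (Set.Icc (a i) (b i) ∩ Set.Icc (a j) (b j)).Nonempty) :
    G.chromaticNumber ≤ 2 := by
  have parity_ne : ∀ m : ℕ, ((m + 1 : ℕ) : ZMod 2) ≠ m := fun m => by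
    rw [Nat.cast_succ]
    exact add_ne_left.mpr one_ne_zero
  let c : G.Coloring (ZMod 2) := .mk (fun i => (#(leftOf a b i) : ZMod 2)) fun {i j} hadj => by
    obtain ⟨hne, hinter⟩ := (hG i j).mp hadj
    rcases eq_or_eq_of_Icc_inter_Icc_subsingleton (hab i) (hab j) (huni i j hne) hinter with h | h
    · rw [card_leftOf_of_eq hab huni h]
      exact (parity_ne _).symm
    · rw [card_leftOf_of_eq hab huni h]
      exact parity_ne _
  simpa using c.colorable.chromaticNumber_le
end

section
/- The class of intersection graphs of finite families of axis-parallel rectangles in the plane is χ-bounded: there is a function f : ℕ → ℕ such that every intersection graph G of finitely many axis-parallel rectangles in ℝ² satisfies χ(G) ≤ f(ω(G)), where ω(G) is the clique number. (One may take f(k) = 4k² or any valid bound.) -/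
open Set

/-
Two intersecting rectangles either have a corner of one inside the other, or they cross: one is
strictly narrower and strictly taller than the other. A point lies in at most `ω` of the rectangles,
so orienting each corner-type edge from the rectangle owning the corner gives out-degrees at most
`4ω`; the corner graph is therefore `8ω`-degenerate and greedily `(8ω + 1)`-colourable. Crossing is
a strict partial order whose chains are cliques, so colouring by height (Mirsky) uses `ω` colours.
The product of the two colourings is proper, whence `χ ≤ (8ω + 1) ω`.
-/

open Finset

namespace SimpleGraph

variable {V : Type*}

theorem IsClique.card_le_of_cliqueFree {G : SimpleGraph V} {k : ℕ} (hG : G.CliqueFree (k + 1))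
    {s : Finset V} (hs : G.IsClique (s : Set V)) : #s ≤ k := by
  by_contra! h
  obtain ⟨t, hts, ht⟩ := exists_subset_card_eq h
  exact hG t ⟨hs.subset hts, ht⟩

theorem Colorable.of_le_sup {G H₁ H₂ : SimpleGraph V} {m n : ℕ} (hG : G ≤ H₁ ⊔ H₂)
    (h₁ : H₁.Colorable m) (h₂ : H₂.Colorable n) : G.Colorable (m * n) := by
  obtain ⟨c₁⟩ := h₁
  obtain ⟨c₂⟩ := h₂
  refine ⟨Coloring.mk (fun v => finProdFinEquiv (c₁ v, c₂ v)) fun {v w} hvw heq => ?_⟩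
  have heq := finProdFinEquiv.injective heq
  rcases hG hvw with h | h
  · exact c₁.valid h (congrArg Prod.fst heq)
  · exact c₂.valid h (congrArg Prod.snd heq)

theorem colorable_of_forall_exists_degree_le [Fintype V] (G : SimpleGraph V) [DecidableRel G.Adj]
    (d : ℕ) (h : ∀ s : Finset V, s.Nonempty → ∃ v ∈ s, #{u ∈ s | G.Adj v u} ≤ d) :
    G.Colorable (d + 1) := by
  classical
  suffices ∀ s : Finset V, ∃ f : V → Fin (d + 1), ∀ v ∈ s, ∀ w ∈ s, G.Adj v w → f v ≠ f w by
    obtain ⟨f, hf⟩ := this univ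
    exact ⟨Coloring.mk f fun hvw => hf _ (mem_univ _) _ (mem_univ _) hvw⟩
  intro s
  induction s using Finset.strongInduction with | _ s ih => ?_
  obtain rfl | hs := s.eq_empty_or_nonempty
  · exact ⟨fun _ => 0, by simp⟩
  obtain ⟨v, hv, hdeg⟩ := h s hs
  obtain ⟨f, hf⟩ := ih (s.erase v) (erase_ssubset hv)
  obtain ⟨c, -, hc⟩ := exists_mem_notMem_of_card_lt_card (s := image f {u ∈ s | G.Adj v u})
    (t := univ) (by simpa using card_image_le.trans_lt (Nat.lt_succ_of_le hdeg))
  have hfresh : ∀ w ∈ s, G.Adj v w → c ≠ f w := fun w hw hvw hcw =>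
    hc (mem_image.2 ⟨w, mem_filter.2 ⟨hw, hvw⟩, hcw.symm⟩)
  refine ⟨Function.update f v c, fun x hx y hy hxy => ?_⟩
  by_cases hxv : x = v <;> by_cases hyv : y = v
  · subst hxv hyv
    exact (G.loopless.irrefl _ hxy).elim
  · subst hxv
    simpa [hyv] using hfresh y hy hxy
  · subst hyv
    simpa [hxv] using (hfresh x hx hxy.symm).symm
  · simpa [hxv, hyv] using hf x (mem_erase.2 ⟨hxv, hx⟩) y (mem_erase.2 ⟨hyv, hy⟩) hxy

theorem colorable_fromRel_of_outdegree_le [Fintype V] (W : V → V → Prop) [DecidableRel W] {D : ℕ}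
    (hW : ∀ v, #{u | W v u} ≤ D) : (fromRel W).Colorable (2 * D + 1) := by
  classical
  refine colorable_of_forall_exists_degree_le _ _ fun s hs => exists_le_of_sum_le hs ?_
  have hout : ∀ v, #{u ∈ s | W v u} ≤ D := fun v =>
    (Finset.card_le_card (monotone_filter_left _ (subset_univ s))).trans (hW v)
  have hdeg : ∀ v, #{u ∈ s | (fromRel W).Adj v u} ≤ #{u ∈ s | W v u} + #{u ∈ s | W u v} := by
    intro v
    refine (Finset.card_le_card fun u hu => ?_).trans (card_union_le _ _)
    simp only [mem_filter, fromRel_adj, Finset.mem_union] at hu ⊢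
    tauto
  calc ∑ v ∈ s, #{u ∈ s | (fromRel W).Adj v u}
      ≤ ∑ v ∈ s, (#{u ∈ s | W v u} + #{u ∈ s | W u v}) := sum_le_sum fun v _ => hdeg v
    _ = ∑ v ∈ s, 2 * #{u ∈ s | W v u} := by
      have hswap : ∑ v ∈ s, #{u ∈ s | W u v} = ∑ v ∈ s, #{u ∈ s | W v u} :=
        (sum_card_bipartiteAbove_eq_sum_card_bipartiteBelow W).symm
      rw [sum_add_distrib, hswap, ← mul_sum, two_mul]
    _ ≤ ∑ _v ∈ s, 2 * D := sum_le_sum fun v _ => Nat.mul_le_mul_left 2 (hout v)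

end SimpleGraph

theorem LTSeries.length_lt_of_isChain_card_le {α : Type*} [Preorder α] {k : ℕ}
    (h : ∀ s : Finset α, IsChain (· < ·) (s : Set α) → #s ≤ k) (p : LTSeries α) : p.length < k := by
  classical
  have hchain : IsChain (· < ·) (Finset.univ.image p : Set α) := by
    simp only [coe_image, coe_univ, Set.image_univ]
    rintro - ⟨i, rfl⟩ - ⟨j, rfl⟩ hij
    rcases lt_or_gt_of_ne (ne_of_apply_ne p hij) with hij | hij
    exacts [Or.inl (p.strictMono hij), Or.inr (p.strictMono hij)]
  have := h _ hchain
  rwa [card_image_of_injective _ p.strictMono.injective, card_univ, Fintype.card_fin] at this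

theorem Order.exists_strictMono_fin_of_forall_length_lt {α : Type*} [Preorder α] {k : ℕ}
    (h : ∀ p : LTSeries α, p.length < k) : ∃ f : α → Fin k, StrictMono f := by
  have hheight : ∀ a : α, height a < k := by
    intro a
    have hk : 0 < k := (h (RelSeries.singleton _ a)).trans_le' (Nat.zero_le _)
    have hle : height a ≤ (k - 1 : ℕ) :=
      height_le fun p _ => Nat.cast_le.2 (Nat.le_sub_one_of_lt (h p))
    exact hle.trans_lt (Nat.cast_lt.2 (Nat.sub_one_lt_of_lt hk))
  have hcast : ∀ a : α, ((height a).toNat : ℕ∞) = height a := fun a =>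
    ENat.natCast_toNat (hheight a).ne_top
  refine ⟨fun a => ⟨(height a).toNat, Nat.cast_lt.1 ((hcast a).trans_lt (hheight a))⟩,
    fun a b hab => ?_⟩
  rw [Fin.mk_lt_mk, ← Nat.cast_lt (α := ℕ∞), hcast, hcast]
  exact height_strictMono hab ((hheight a).trans (ENat.natCast_lt_top k))

theorem SimpleGraph.colorable_fromRel_of_isChain_card_le {V : Type*} (r : V → V → Prop)
    [IsStrictOrder V r] {k : ℕ} (h : ∀ s : Finset V, IsChain r (s : Set V) → #s ≤ k) :
    (fromRel r).Colorable k := by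
  let := partialOrderOfSO r
  obtain ⟨f, hf⟩ :=
    Order.exists_strictMono_fin_of_forall_length_lt (LTSeries.length_lt_of_isChain_card_le h)
  refine ⟨Coloring.mk f ?_⟩
  rintro u v ⟨-, huv | hvu⟩
  exacts [(hf huv).ne, (hf hvu).ne']

def boxCorner {d : ℕ} (a b : Fin d → ℝ) (c : Fin d → Bool) : Fin d → ℝ :=
  fun m => if c m then b m else a m

theorem le_of_mem_boxSet {d : ℕ} {a b x : Fin d → ℝ} (hx : x ∈ boxSet a b) : a ≤ b :=
  fun m => (hx m).1.trans (hx m).2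

theorem exists_boxCorner_mem_boxSet {d : ℕ} {a b a' b' x : Fin d → ℝ} (hx : x ∈ boxSet a b)
    (hx' : x ∈ boxSet a' b') (h : ∀ m, a' m ≤ a m ∨ b m ≤ b' m) :
    ∃ c, boxCorner a b c ∈ boxSet a' b' := by
  refine ⟨fun m => decide (a m < a' m), fun m => ?_⟩
  by_cases hm : a m < a' m
  · have hb : b m ≤ b' m := (h m).resolve_left hm.not_ge
    simp only [boxCorner, hm, decide_true, if_true]
    exact ⟨(hx' m).1.trans (hx m).2, hb⟩
  · simp only [boxCorner, hm, decide_false, Bool.false_eq_true, if_false]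
    exact ⟨not_lt.1 hm, (hx m).1.trans (hx' m).2⟩

def SimpleGraph.IsIntersectionGraph {ι X : Type*} (G : SimpleGraph ι) (S : ι → Set X) : Prop :=
  ∀ i j, G.Adj i j ↔ i ≠ j ∧ (S i ∩ S j).Nonempty

theorem SimpleGraph.IsIntersectionGraph.card_filter_mem_le {ι X : Type*} [Fintype ι]
    {G : SimpleGraph ι} {S : ι → Set X} (hG : G.IsIntersectionGraph S) {k : ℕ}
    (hk : G.CliqueFree (k + 1)) (x : X) [DecidablePred fun i => x ∈ S i] :
    #{i | x ∈ S i} ≤ k :=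
  IsClique.card_le_of_cliqueFree hk fun i hi j hj hij =>
    (hG i j).2 ⟨hij, x, (Finset.mem_filter.1 hi).2, (Finset.mem_filter.1 hj).2⟩

section Boxes

variable {ι : Type*}

def HasCornerIn {d : ℕ} (a b : ι → Fin d → ℝ) (i j : ι) : Prop :=
  ∃ c, boxCorner (a i) (b i) c ∈ boxSet (a j) (b j)

theorem card_hasCornerIn_le [Fintype ι] {d : ℕ} {a b : ι → Fin d → ℝ} {G : SimpleGraph ι}
    (hG : G.IsIntersectionGraph fun i => boxSet (a i) (b i)) {k : ℕ} (hk : G.CliqueFree (k + 1))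
    [DecidableRel (HasCornerIn a b)] (i : ι) : #{j | HasCornerIn a b i j} ≤ 2 ^ d * k := by
  classical
  calc #{j | HasCornerIn a b i j}
      ≤ #(Finset.univ.biUnion fun c => {j | boxCorner (a i) (b i) c ∈ boxSet (a j) (b j)}) :=
        Finset.card_le_card fun j hj => by
          obtain ⟨c, hc⟩ := (Finset.mem_filter.1 hj).2
          exact mem_biUnion.2 ⟨c, mem_univ _, mem_filter.2 ⟨mem_univ _, hc⟩⟩
    _ ≤ ∑ _c : Fin d → Bool, k :=
        Finset.card_biUnion_le.trans (Finset.sum_le_sum fun c _ => hG.card_filter_mem_le hk _)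
    _ = 2 ^ d * k := by simp

/-- The nonempty rectangles `i` and `j` form a cross, `i` being strictly narrower and strictly
taller than `j`. -/
def Crosses (a b : ι → Fin 2 → ℝ) (i j : ι) : Prop :=
  a i ≤ b i ∧ a j ≤ b j ∧ a j 0 < a i 0 ∧ b i 0 < b j 0 ∧ a i 1 < a j 1 ∧ b j 1 < b i 1

instance (a b : ι → Fin 2 → ℝ) : IsStrictOrder ι (Crosses a b) where
  irrefl _ h := h.2.2.1.false
  trans _ _ _ h h' :=
    ⟨h.1, h'.2.1, h'.2.2.1.trans h.2.2.1, h.2.2.2.1.trans h'.2.2.2.1,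
      h.2.2.2.2.1.trans h'.2.2.2.2.1, h'.2.2.2.2.2.trans h.2.2.2.2.2⟩

theorem Crosses.inter_nonempty {a b : ι → Fin 2 → ℝ} {i j : ι} (h : Crosses a b i j) :
    (boxSet (a i) (b i) ∩ boxSet (a j) (b j)).Nonempty := by
  obtain ⟨hi, hj, h₁, h₂, h₃, h₄⟩ := h
  exact ⟨![a i 0, a j 1], Fin.forall_fin_two.2 ⟨⟨le_rfl, hi 0⟩, ⟨h₃.le, (hj 1).trans h₄.le⟩⟩,
    Fin.forall_fin_two.2 ⟨⟨h₁.le, (hi 0).trans h₂.le⟩, ⟨le_rfl, hj 1⟩⟩⟩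

theorem hasCornerIn_or_crosses {a b : ι → Fin 2 → ℝ} {i j : ι} {x : Fin 2 → ℝ}
    (hi : x ∈ boxSet (a i) (b i)) (hj : x ∈ boxSet (a j) (b j)) :
    HasCornerIn a b i j ∨ HasCornerIn a b j i ∨ Crosses a b i j ∨ Crosses a b j i := by
  by_cases h : ∀ m, a j m ≤ a i m ∨ b i m ≤ b j m
  · exact Or.inl (exists_boxCorner_mem_boxSet hi hj h)
  by_cases h' : ∀ m, a i m ≤ a j m ∨ b j m ≤ b i m
  · exact Or.inr (Or.inl (exists_boxCorner_mem_boxSet hj hi h'))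
  simp only [not_forall, not_or, not_le, Fin.exists_fin_two] at h h'
  right; right
  rcases h with hm | hm <;> rcases h' with hm' | hm'
  · exact (hm.1.trans hm'.1).false.elim
  · exact Or.inr ⟨le_of_mem_boxSet hj, le_of_mem_boxSet hi, hm.1, hm.2, hm'.1, hm'.2⟩
  · exact Or.inl ⟨le_of_mem_boxSet hi, le_of_mem_boxSet hj, hm'.1, hm'.2, hm.1, hm.2⟩
  · exact (hm.1.trans hm'.1).false.elim

theorem colorable_of_isIntersectionGraph_rectangles [Fintype ι] {a b : ι → Fin 2 → ℝ}
    {G : SimpleGraph ι} (hG : G.IsIntersectionGraph fun i => boxSet (a i) (b i)) {k : ℕ}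
    (hk : G.CliqueFree (k + 1)) : G.Colorable ((8 * k + 1) * k) := by
  classical
  have hsup : G ≤ SimpleGraph.fromRel (HasCornerIn a b) ⊔ SimpleGraph.fromRel (Crosses a b) := by
    intro i j hij
    obtain ⟨hne, x, hi, hj⟩ := (hG i j).1 hij
    rcases hasCornerIn_or_crosses hi hj with h | h | h | h
    exacts [Or.inl ⟨hne, Or.inl h⟩, Or.inl ⟨hne, Or.inr h⟩, Or.inr ⟨hne, Or.inl h⟩,
      Or.inr ⟨hne, Or.inr h⟩]
  have hcorner : (SimpleGraph.fromRel (HasCornerIn a b)).Colorable (8 * k + 1) := by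
    simpa [← mul_assoc] using
      SimpleGraph.colorable_fromRel_of_outdegree_le _ (card_hasCornerIn_le hG hk)
  have hcross : (SimpleGraph.fromRel (Crosses a b)).Colorable k := by
    refine SimpleGraph.colorable_fromRel_of_isChain_card_le _ fun s hs =>
      SimpleGraph.IsClique.card_le_of_cliqueFree hk fun i hi j hj hij => (hG i j).2 ⟨hij, ?_⟩
    rcases hs hi hj hij with h | h
    exacts [h.inter_nonempty, Set.inter_comm (boxSet (a j) (b j)) _ ▸ h.inter_nonempty]
  exact SimpleGraph.Colorable.of_le_sup hsup hcorner hcross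

end Boxes

theorem rectangles_chi_bounded :
    ∃ f : ℕ → ℕ, ∀ (n : ℕ) (a b : Fin n → Fin 2 → ℝ)
      (G : SimpleGraph (Fin n)),
      (∀ i j : Fin n, G.Adj i j ↔
        i ≠ j ∧ (boxSet (a i) (b i) ∩ boxSet (a j) (b j)).Nonempty) →
      ∀ k : ℕ, G.CliqueFree (k + 1) → G.chromaticNumber ≤ (f k : ℕ∞) :=
  ⟨fun k => (8 * k + 1) * k, fun _ _ _ _ hG _ hk =>
    (colorable_of_isIntersectionGraph_rectangles hG hk).chromaticNumber_le⟩
end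

section
/- The graph consisting of a 6-cycle v_1 v_2 v_3 v_4 v_5 v_6 together with a hub vertex h adjacent to v_1, v_3, and v_5 is a 2-CBU graph: it can be realized as the intersection graph of 7 axis-parallel rectangles in the plane such that every pairwise intersection of distinct rectangles lies in a vertical line. -/
open Set

/-- The 6-cycle `v₁ v₂ v₃ v₄ v₅ v₆` (vertices `0,…,5`) plus a hub `6`
adjacent to `v₁, v₃, v₅` (vertices `0, 2, 4`). -/
def G₁ : SimpleGraph (Fin 7) :=
  SimpleGraph.fromRel (fun u v =>
    ((u : ℕ), (v : ℕ)) ∈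
      [(0, 1), (1, 2), (2, 3), (3, 4), (4, 5), (5, 0), (6, 0), (6, 2), (6, 4)])

/-!
Place the rectangles, with integer corners, in the four columns `[0,1], …, [3,4]`:
`v₁ = [0,1] × [0,12]`, `v₄ = [3,4] × [2,10]`, then `v₂, h, v₆ = [1,2] × ([-4,1], [2,10], [11,16])`
and `v₃, v₅ = [2,3] × ([0,4], [8,12])`. Two rectangles in the same column are vertically
disjoint, and rectangles in different columns meet at most on the common column boundary, so
every intersection lies on a vertical line; which pairs meet is a finite check of corner
inequalities.
-/

section Boxes

variable {d n : ℕ}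

lemma forall_le_of_boxSet_inter_nonempty {a b a' b' : Fin d → ℝ}
    (hne : (boxSet a b ∩ boxSet a' b').Nonempty) : ∀ k, a k ≤ b' k ∧ a' k ≤ b k := by
  obtain ⟨x, hx, hx'⟩ := hne
  exact fun k => ⟨(hx k).1.trans (hx' k).2, (hx' k).1.trans (hx k).2⟩

lemma boxSet_inter_nonempty_iff {a b a' b' : Fin d → ℝ} (h : ∀ k, a k ≤ b k)
    (h' : ∀ k, a' k ≤ b' k) :
    (boxSet a b ∩ boxSet a' b').Nonempty ↔ ∀ k, a k ≤ b' k ∧ a' k ≤ b k := by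
  refine ⟨forall_le_of_boxSet_inter_nonempty, fun hle => ?_⟩
  exact ⟨fun k => max (a k) (a' k), fun k => ⟨le_max_left _ _, max_le (h k) (hle k).2⟩,
    fun k => ⟨le_max_right _ _, max_le (hle k).1 (h' k)⟩⟩

lemma boxSet_inter_subset_of_le {a b a' b' : Fin d → ℝ} {k : Fin d} (h : b k ≤ a' k) :
    boxSet a b ∩ boxSet a' b' ⊆ {x | x k = b k} :=
  fun _ ⟨hx, hx'⟩ => le_antisymm (hx k).2 (h.trans (hx' k).1)

lemma exists_boxSet_inter_subset_hyperplane {a b a' b' : Fin d → ℝ} (k : Fin d)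
    (h : b k ≤ a' k ∨ b' k ≤ a k ∨ ¬ ∀ l, a l ≤ b' l ∧ a' l ≤ b l) :
    ∃ c, boxSet a b ∩ boxSet a' b' ⊆ {x | x k = c} := by
  rcases h with h | h | h
  · exact ⟨_, boxSet_inter_subset_of_le h⟩
  · exact ⟨_, inter_comm (boxSet a b) _ ▸ boxSet_inter_subset_of_le h⟩
  · exact ⟨0, fun x hx => absurd (forall_le_of_boxSet_inter_nonempty ⟨x, hx⟩) h⟩

theorem isCBU_of_boxes (hd : 0 < d) (G : SimpleGraph (Fin n)) (a b : Fin n → Fin d → ℝ)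
    (hlt : ∀ i k, a i k < b i k)
    (hsep : ∀ i j, i ≠ j → b i ⟨0, hd⟩ ≤ a j ⟨0, hd⟩ ∨ b j ⟨0, hd⟩ ≤ a i ⟨0, hd⟩ ∨
      ¬ ∀ k, a i k ≤ b j k ∧ a j k ≤ b i k)
    (hadj : ∀ i j, G.Adj i j ↔ i ≠ j ∧ ∀ k, a i k ≤ b j k ∧ a j k ≤ b i k) :
    IsCBU d hd G := by
  refine ⟨a, b, hlt, fun i j hij => exists_boxSet_inter_subset_hyperplane _ (hsep i j hij),
    fun i j => ?_⟩
  rw [hadj, boxSet_inter_nonempty_iff (fun k => (hlt i k).le) (fun k => (hlt j k).le)]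

theorem isCBU_of_int_boxes (hd : 0 < d) (G : SimpleGraph (Fin n))
    (a b : Fin n → Fin d → ℤ) (hlt : ∀ i k, a i k < b i k)
    (hsep : ∀ i j, i ≠ j → b i ⟨0, hd⟩ ≤ a j ⟨0, hd⟩ ∨ b j ⟨0, hd⟩ ≤ a i ⟨0, hd⟩ ∨
      ¬ ∀ k, a i k ≤ b j k ∧ a j k ≤ b i k)
    (hadj : ∀ i j, G.Adj i j ↔ i ≠ j ∧ ∀ k, a i k ≤ b j k ∧ a j k ≤ b i k) :
    IsCBU d hd G :=
  isCBU_of_boxes hd G (fun i k => a i k) (fun i k => b i k) (by simpa only [Int.cast_lt])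
    (by simpa only [Int.cast_le]) (by simpa only [Int.cast_le])

end Boxes

instance : DecidableRel G₁.Adj := fun _ _ => decidable_of_iff' _ (SimpleGraph.fromRel_adj _ _ _)

def G₁Lower : Fin 7 → Fin 2 → ℤ :=
  ![![0, 0], ![1, -4], ![2, 0], ![3, 2], ![2, 8], ![1, 11], ![1, 2]]

def G₁Upper : Fin 7 → Fin 2 → ℤ :=
  ![![1, 12], ![2, 1], ![3, 4], ![4, 10], ![3, 12], ![2, 16], ![2, 10]]

theorem G₁_is_two_CBU : IsCBU 2 (by norm_num) G₁ :=
  isCBU_of_int_boxes _ G₁ G₁Lower G₁Upper (by decide) (by decide) (by decide)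
end
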